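/- Let λ > 0, let a, b, c be real numbers, let N ≥ 1 and let Y_1, …, Y_N be nonnegative reals with positive exponents α_1, …, α_N, and set α = ∑_{k=1}^N α_k. Then the Generalized Box–Cox Transformation satisfies the label-transformation identity G_λ(a · b · c · ∏_{k=1}^N Y_k^{α_k}) = λ^{α+2} · G_λ(a) · G_λ(b) · G_λ(c) · ∏_{k=1}^N (G_λ(Y_k))^{α_k}, where powers with real exponents are interpreted via Real.rpow. -/

import Mathlib

/-- The Generalized Box–Cox Transformation (GBCT) with parameter `lam`. -/
noncomputable def gbct (lam : ℝ) (x : ℝ) : ℝ :=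
  if 0 ≤ x then x ^ lam / lam else -((-x) ^ lam) / lam

/-! `λ · G_λ` is the odd power map `x ↦ sign x · |x| ^ λ`, which is multiplicative and commutes
with real powers on `[0, ∞)`. Multiplying the identity by `λ` turns it into
`λ G(a b c ∏ Y_k^{α_k}) = λG(a) · λG(b) · λG(c) · ∏ (λ G(Y_k))^{α_k}`, and the powers of `λ`
collect to `λ^{α+3}`. -/

section Gbct

variable {lam : ℝ}

lemma gbct_of_nonneg {x : ℝ} (hx : 0 ≤ x) : gbct lam x = x ^ lam / lam := by
  simp [gbct, hx]

@[simp]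
lemma gbct_zero : gbct lam 0 = 0 := by
  rcases eq_or_ne lam 0 with rfl | hlam <;> simp [gbct, *]

lemma gbct_neg (x : ℝ) : gbct lam (-x) = -gbct lam x := by
  rcases lt_trichotomy x 0 with hx | rfl | hx
  · simp [gbct, hx.le, not_le.2 hx, neg_div]
  · simp
  · simp [gbct, hx.le, not_le.2 (neg_neg_of_pos hx), neg_div]

lemma gbct_nonneg (hlam : 0 ≤ lam) {x : ℝ} (hx : 0 ≤ x) : 0 ≤ gbct lam x := by
  rw [gbct_of_nonneg hx]
  positivity

lemma mul_gbct_of_nonneg (hlam : lam ≠ 0) {x : ℝ} (hx : 0 ≤ x) :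
    lam * gbct lam x = x ^ lam := by
  rw [gbct_of_nonneg hx, mul_div_cancel₀ _ hlam]

lemma mul_gbct_mul_of_nonneg (hlam : lam ≠ 0) {x y : ℝ} (hx : 0 ≤ x) (hy : 0 ≤ y) :
    lam * gbct lam (x * y) = lam * gbct lam x * (lam * gbct lam y) := by
  rw [mul_gbct_of_nonneg hlam hx, mul_gbct_of_nonneg hlam hy,
    mul_gbct_of_nonneg hlam (mul_nonneg hx hy), Real.mul_rpow hx hy]

lemma mul_gbct_mul (hlam : lam ≠ 0) (x y : ℝ) :
    lam * gbct lam (x * y) = lam * gbct lam x * (lam * gbct lam y) := by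
  rcases le_total 0 x with hx | hx <;> rcases le_total 0 y with hy | hy
  · exact mul_gbct_mul_of_nonneg hlam hx hy
  · have := mul_gbct_mul_of_nonneg hlam hx (neg_nonneg.2 hy)
    rw [mul_neg, gbct_neg, gbct_neg] at this
    linarith
  · have := mul_gbct_mul_of_nonneg hlam (neg_nonneg.2 hx) hy
    rw [neg_mul, gbct_neg, gbct_neg] at this
    linarith
  · have := mul_gbct_mul_of_nonneg hlam (neg_nonneg.2 hx) (neg_nonneg.2 hy)
    rw [neg_mul_neg, gbct_neg, gbct_neg] at this
    rw [this]
    ring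

variable (lam) in
noncomputable def scaledGbct (hlam : lam ≠ 0) : ℝ →* ℝ where
  toFun x := lam * gbct lam x
  map_one' := by rw [mul_gbct_of_nonneg hlam zero_le_one, Real.one_rpow]
  map_mul' := mul_gbct_mul hlam

lemma scaledGbct_apply (hlam : lam ≠ 0) (x : ℝ) : scaledGbct lam hlam x = lam * gbct lam x :=
  rfl

lemma mul_gbct_rpow (hlam : 0 < lam) {x : ℝ} (hx : 0 ≤ x) (α : ℝ) :
    lam * gbct lam (x ^ α) = lam ^ α * gbct lam x ^ α := calc
  lam * gbct lam (x ^ α) = (x ^ lam) ^ α := by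
    rw [mul_gbct_of_nonneg hlam.ne' (Real.rpow_nonneg hx α), ← Real.rpow_mul hx,
      mul_comm, Real.rpow_mul hx]
  _ = lam ^ α * gbct lam x ^ α := by
    rw [← mul_gbct_of_nonneg hlam.ne' hx, Real.mul_rpow hlam.le (gbct_nonneg hlam.le hx)]

end Gbct

theorem gbct_label_transformation_general (lam : ℝ) (hlam : 0 < lam) (a b c : ℝ)
    (N : ℕ) (Y : Fin N → ℝ) (hY : ∀ k, 0 ≤ Y k)
    (α : Fin N → ℝ) :
    gbct lam (a * b * c * ∏ k, Y k ^ α k) =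
      lam ^ ((∑ k, α k) + 2) * gbct lam a * gbct lam b * gbct lam c *
        ∏ k, (gbct lam (Y k)) ^ α k := by
  have hprod : lam * gbct lam (∏ k, Y k ^ α k) =
      (lam ^ ∑ k, α k) * ∏ k, gbct lam (Y k) ^ α k := by
    rw [← scaledGbct_apply hlam.ne', map_prod, Real.rpow_sum_of_pos hlam,
      ← Finset.prod_mul_distrib]
    exact Finset.prod_congr rfl fun k _ => mul_gbct_rpow hlam (hY k) (α k)
  have hscaled : lam * gbct lam (a * b * c * ∏ k, Y k ^ α k) =
      lam * gbct lam a * (lam * gbct lam b) * (lam * gbct lam c) *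
        ((lam ^ ∑ k, α k) * ∏ k, gbct lam (Y k) ^ α k) := by
    simp only [← scaledGbct_apply hlam.ne', map_mul] at hprod ⊢
    rw [hprod]
  refine mul_left_cancel₀ hlam.ne' ?_
  rw [hscaled, Real.rpow_add hlam, Real.rpow_two]
  ring

/-- Label-transformation identity: for λ > 0, reals a, b, c, N ≥ 1 nonnegative reals
Y_1, …, Y_N with positive exponents α_1, …, α_N, and α = ∑_k α_k,
`G_λ(a·b·c·∏_k Y_k^{α_k}) = λ^{α+2} · G_λ(a) · G_λ(b) · G_λ(c) · ∏_k (G_λ(Y_k))^{α_k}`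
(powers with real exponents via `Real.rpow`). -/
theorem gbct_label_transformation (lam : ℝ) (hlam : 0 < lam) (a b c : ℝ)
    (N : ℕ) (hN : 1 ≤ N) (Y : Fin N → ℝ) (hY : ∀ k, 0 ≤ Y k)
    (α : Fin N → ℝ) (hα : ∀ k, 0 < α k) :
    gbct lam (a * b * c * ∏ k, Y k ^ α k) =
      lam ^ ((∑ k, α k) + 2) * gbct lam a * gbct lam b * gbct lam c *
        ∏ k, (gbct lam (Y k)) ^ α k :=
  gbct_label_transformation_general lam hlam a b c N Y hY α
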